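/- For all (a₁,a₂) ∈ ℝ², S_ρ(a₁,a₂)² = K(X₁(a₁,a₂), X₂(a₁,a₂)). -/

import Mathlib

open Real

noncomputable section

/-- `X₁` for `C₂`. -/
def X1 (a₁ a₂ : ℝ) : ℝ :=
  2 * (Real.cos (2 * π * a₁) + Real.cos (2 * π * (a₁ - a₂)))

/-- `X₂` for `C₂`. -/
def X2 (a₁ a₂ : ℝ) : ℝ :=
  2 * (Real.cos (2 * π * a₂) + Real.cos (2 * π * (2 * a₁ - a₂)))

/-- The weight polynomial `K` of `C₂`. -/
def K (y₁ y₂ : ℝ) : ℝ :=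
  (y₁ ^ 2 - 4 * y₂) * ((y₂ + 4) ^ 2 - 4 * y₁ ^ 2)

/-- The lowest antisymmetric orbit function `S_ρ` of `C₂`. -/
def Srho (a₁ a₂ : ℝ) : ℝ :=
  2 * (Real.cos (2 * π * (a₁ + a₂)) - Real.cos (2 * π * (-a₁ + 2 * a₂)) -
    Real.cos (2 * π * (3 * a₁ - a₂)) + Real.cos (2 * π * (3 * a₁ - 2 * a₂)))

/-!
In the angles `p = 2πa₁`, `q = 2π(a₁ - a₂)` put `α = 2 cos p`, `β = 2 cos q`. Then `X₁ = α + β` and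
`X₂ = αβ`, so `K(X₁, X₂) = (α - β)² (α² - 4) (β² - 4)`. On the other hand `S_ρ` is the Weyl
denominator `(2 sin p)(2 sin q)(α - β)`, and `(2 sin p)² = 4 - α²`, `(2 sin q)² = 4 - β²`.
-/

lemma two_sin_sq (x : ℝ) : (2 * sin x) ^ 2 = 4 - (2 * cos x) ^ 2 := by
  linear_combination 4 * sin_sq_add_cos_sq x

lemma K_add_mul (α β : ℝ) : K (α + β) (α * β) = (α - β) ^ 2 * ((4 - α ^ 2) * (4 - β ^ 2)) := by
  unfold K
  ring

lemma X1_eq_add (a₁ a₂ : ℝ) :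
    X1 a₁ a₂ = 2 * cos (2 * π * a₁) + 2 * cos (2 * π * (a₁ - a₂)) := by
  unfold X1
  ring

lemma X2_eq_mul (a₁ a₂ : ℝ) :
    X2 a₁ a₂ = 2 * cos (2 * π * a₁) * (2 * cos (2 * π * (a₁ - a₂))) := by
  set p := 2 * π * a₁
  set q := 2 * π * (a₁ - a₂)
  have hv : 2 * π * a₂ = p - q := by ring
  have hw : 2 * π * (2 * a₁ - a₂) = p + q := by ring
  rw [X2, hv, hw, cos_sub, cos_add]
  ring

lemma Srho_eq_mul (a₁ a₂ : ℝ) :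
    Srho a₁ a₂ = 2 * sin (2 * π * a₁) * (2 * sin (2 * π * (a₁ - a₂))) *
      (2 * cos (2 * π * a₁) - 2 * cos (2 * π * (a₁ - a₂))) := by
  set p := 2 * π * a₁
  set q := 2 * π * (a₁ - a₂)
  have h₁ : 2 * π * (a₁ + a₂) = 2 * p - q := by ring
  have h₂ : 2 * π * (-a₁ + 2 * a₂) = p - 2 * q := by ring
  have h₃ : 2 * π * (3 * a₁ - a₂) = 2 * p + q := by ring
  have h₄ : 2 * π * (3 * a₁ - 2 * a₂) = p + 2 * q := by ring
  rw [Srho, h₁, h₂, h₃, h₄]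
  simp only [cos_add, cos_sub, sin_two_mul]
  ring

/-- For `C₂`, `S_ρ² = K(X₁, X₂)` pointwise. -/
theorem Srho_sq_eq_K_C2 (a₁ a₂ : ℝ) :
    (Srho a₁ a₂) ^ 2 = K (X1 a₁ a₂) (X2 a₁ a₂) := by
  rw [Srho_eq_mul, X1_eq_add, X2_eq_mul, K_add_mul, mul_pow, mul_pow, two_sin_sq, two_sin_sq]
  ring

end
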